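/- For fixed z ≥ 0 and t > 0, the Ogata–Banks concentration C(z,t; R) is a nonincreasing function of the retardation factor R on [1, ∞) when v ≥ 0: larger retardation yields lower concentration at given depth and time. -/

import Mathlib

/-- The complementary error function `erfc x = (2/√π) ∫ₓ^∞ e^{-s²} ds`. -/
noncomputable def erfc (x : ℝ) : ℝ :=
  (2 / Real.sqrt Real.pi) * ∫ s in Set.Ioi x, Real.exp (-s ^ 2)

/-- The Ogata–Banks analytical solution of the advection–diffusion–retardation
equation. -/
noncomputable def ogataBanks (C0 v D R z t : ℝ) : ℝ :=
  (C0 / 2) * (erfc ((R * z - v * t) / (2 * Real.sqrt (R * D * t))) +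
    Real.exp (v * z / D) * erfc ((R * z + v * t) / (2 * Real.sqrt (R * D * t))))

/-!
Write `u = √R`, `a = z / (2√(Dt))` and `b = vt / (2√(Dt))`, so that `vz / D = 4ab` and the
concentration is `(C0/2) (erfc (au - b/u) + e^{4ab} erfc (au + b/u))`. Because
`e^{4ab} e^{-(au + b/u)²} = e^{-(au - b/u)²}`, the two Gaussian terms of the `u`-derivative merge
into `-(4a/√π) e^{-(au - b/u)²} ≤ 0`; hence the concentration decreases in `u`, hence in `R`.
-/

open Real Set MeasureTheory

theorem hasDerivAt_integral_Ioi {E : Type*} [NormedAddCommGroup E] [NormedSpace ℝ E]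
    [CompleteSpace E] {f : ℝ → E} (hf : Integrable f) (hf_cont : Continuous f) (x : ℝ) :
    HasDerivAt (fun y => ∫ s in Ioi y, f s) (-f x) x := by
  have tail_eq : (fun y => ∫ s in Ioi y, f s) = fun y => (∫ s in Ioi 0, f s) - ∫ s in 0..y, f s :=
    funext fun y => eq_sub_of_add_eq' <|
      intervalIntegral.integral_interval_add_Ioi' hf.intervalIntegrable hf.integrableOn
  rw [tail_eq]
  exact (intervalIntegral.integral_hasDerivAt_right hf.intervalIntegrable
    (hf_cont.stronglyMeasurableAtFilter _ _) hf_cont.continuousAt).const_sub _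

theorem hasDerivAt_erfc (x : ℝ) : HasDerivAt erfc (-(2 / √π) * exp (-x ^ 2)) x := by
  have gauss_integrable : Integrable fun s : ℝ => exp (-s ^ 2) := by
    simpa using integrable_exp_neg_mul_sq one_pos
  rw [neg_mul, ← mul_neg]
  exact (hasDerivAt_integral_Ioi gauss_integrable (by fun_prop) x).const_mul _

theorem exp_mul_exp_neg_add_sq (x y : ℝ) :
    exp (4 * x * y) * exp (-(x + y) ^ 2) = exp (-(x - y) ^ 2) := by
  rw [← exp_add]; ring_nf

noncomputable def erfcPair (a b u : ℝ) : ℝ :=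
  erfc (a * u - b / u) + exp (4 * a * b) * erfc (a * u + b / u)

theorem hasDerivAt_erfcPair (a b : ℝ) {u : ℝ} (hu : u ≠ 0) :
    HasDerivAt (erfcPair a b) (-(4 * a / √π) * exp (-(a * u - b / u) ^ 2)) u := by
  have hinv : HasDerivAt (fun u => b / u) (-(b / u ^ 2)) u := by
    simpa [div_eq_mul_inv, neg_div] using (hasDerivAt_inv hu).const_mul b
  have hlin : HasDerivAt (fun u => a * u) a u := by simpa using (hasDerivAt_id u).const_mul a
  have key := exp_mul_exp_neg_add_sq (a * u) (b / u)
  rw [show 4 * (a * u) * (b / u) = 4 * a * b by field_simp] at key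
  refine (((hasDerivAt_erfc _).comp u (hlin.sub hinv)).add
    (((hasDerivAt_erfc _).comp u (hlin.add hinv)).const_mul (exp (4 * a * b)))).congr_deriv ?_
  simp only [Pi.sub_apply, Pi.add_apply]
  linear_combination (-(2 / √π) * (a - b / u ^ 2)) * key

theorem antitoneOn_erfcPair {a : ℝ} (b : ℝ) (ha : 0 ≤ a) : AntitoneOn (erfcPair a b) (Ioi 0) :=
  antitoneOn_of_hasDerivWithinAt_nonpos (convex_Ioi 0)
    (fun _ hu => (hasDerivAt_erfcPair a b (ne_of_gt hu)).continuousAt.continuousWithinAt)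
    (fun _ hu => (hasDerivAt_erfcPair a b (ne_of_gt (interior_subset hu))).hasDerivWithinAt)
    (fun u _ => mul_nonpos_of_nonpos_of_nonneg (neg_nonpos.2 (by positivity)) (exp_pos _).le)

theorem ogataBanks_eq_erfcPair {C0 v D R z t : ℝ} (hD : 0 < D) (ht : 0 < t) (hR : 0 < R) :
    ogataBanks C0 v D R z t =
      C0 / 2 * erfcPair (z / (2 * √(D * t))) (v * t / (2 * √(D * t))) √R := by
  have hs_sq : √(D * t) ^ 2 = D * t := sq_sqrt (mul_pos hD ht).le
  have hr_sq : √R ^ 2 = R := sq_sqrt hR.le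
  have hsqrt : √(R * D * t) = √R * √(D * t) := by rw [mul_assoc, sqrt_mul hR.le]
  have hexponent : 4 * (z / (2 * √(D * t))) * (v * t / (2 * √(D * t))) = v * z / D := by
    field_simp
    linear_combination (-4 * v * z) * hs_sq
  have hminus : (R * z - v * t) / (2 * √(R * D * t)) =
      z / (2 * √(D * t)) * √R - v * t / (2 * √(D * t)) / √R := by
    rw [hsqrt]; field_simp; linear_combination (-z) * hr_sq
  have hplus : (R * z + v * t) / (2 * √(R * D * t)) =
      z / (2 * √(D * t)) * √R + v * t / (2 * √(D * t)) / √R := by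
    rw [hsqrt]; field_simp; linear_combination (-z) * hr_sq
  rw [ogataBanks, erfcPair, hexponent, hminus, hplus]

theorem ogataBanks_antitoneOn_Ioi {C0 v D z t : ℝ} (hC0 : 0 ≤ C0) (hD : 0 < D) (hz : 0 ≤ z)
    (ht : 0 < t) : AntitoneOn (fun R => ogataBanks C0 v D R z t) (Ioi 0) := by
  intro R₁ hR₁ R₂ hR₂ hR
  simp only [ogataBanks_eq_erfcPair hD ht hR₁, ogataBanks_eq_erfcPair hD ht hR₂]
  exact mul_le_mul_of_nonneg_left (antitoneOn_erfcPair _ (by positivity)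
    (sqrt_pos.2 hR₁) (sqrt_pos.2 hR₂) (sqrt_le_sqrt hR)) (by positivity)

theorem ogata_banks_antitone_in_retardation_general (C0 v D z t : ℝ)
    (hC0 : 0 < C0) (hD : 0 < D) (hz : 0 ≤ z) (ht : 0 < t) :
    AntitoneOn (fun R => ogataBanks C0 v D R z t) (Set.Ici 1) :=
  (ogataBanks_antitoneOn_Ioi hC0.le hD hz ht).mono (Ici_subset_Ioi.2 one_pos)

/-- For fixed `z ≥ 0` and `t > 0`, the Ogata–Banks concentration is nonincreasing
in the retardation factor `R` on `[1, ∞)`. -/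
theorem ogata_banks_antitone_in_retardation (C0 v D z t : ℝ)
    (hC0 : 0 < C0) (hv : 0 ≤ v) (hD : 0 < D) (hz : 0 ≤ z) (ht : 0 < t) :
    AntitoneOn (fun R => ogataBanks C0 v D R z t) (Set.Ici 1) :=
  ogata_banks_antitone_in_retardation_general C0 v D z t hC0 hD hz ht
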